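/- Under perfect ranking with fixed set size k and m → ∞ (so n = mk → ∞), fix p ∈ (0,1) and set r_p = np if np is an integer and r_p = ⌊np⌋ + 1 otherwise. If F is continuous and strictly increasing at ζ_p, in the sense that F(ζ_p − ε) < p < F(ζ_p + ε) for every ε > 0, then the r_p-th order statistic Y*_{(r_p)} of the pooled ranked set sample converges in probability to ζ_p as m → ∞. -/

import Mathlib

open MeasureTheory ProbabilityTheory Filter

/-- The beta function `B(a,b) = ∫₀¹ u^(a-1) (1-u)^(b-1) du`. -/
noncomputable def betaFun (a b : ℝ) : ℝ :=
  ∫ u in (0:ℝ)..1, u ^ (a - 1) * (1 - u) ^ (b - 1)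

/-- The regularized incomplete beta function `IB_{a,b}(t)`. -/
noncomputable def IB (a b t : ℝ) : ℝ :=
  (∫ u in (0:ℝ)..t, u ^ (a - 1) * (1 - u) ^ (b - 1)) / betaFun a b

/-- The `i`-th order statistic (1-based) of the pooled values `fun idx => Y idx ω`. -/
noncomputable def orderStat {Ω ι : Type*} [Fintype ι] (Y : ι → Ω → ℝ) (i : ℕ) (ω : Ω) : ℝ :=
  ((Finset.univ.val.map fun idx => Y idx ω).sort (· ≤ ·)).getD (i - 1) 0

/-! Averaging the rank-wise distribution functions `IB_{r,k-r+1}(F)` over the ranks gives back `F`,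
because the Bernstein basis polynomials sum to one. So the number of pooled observations `≤ y`
is a sum of `n` independent indicators with mean `n F(y)` and variance at most `n / 4`.
The event `Y*_{(r)} > y` says that fewer than `r` observations are `≤ y`, and `Y*_{(r)} ≤ y`
that at least `r` are. With `r = ⌈np⌉` and `F(ζ - ε) < p < F(ζ + ε)`, at `y = ζ ± ε` both are
deviations of order `n` from the mean, of probability `O(1/n)` by Chebyshev's inequality. -/

theorem integral_pow_mul_one_sub_pow_succ (r s : ℕ) :
    ((r : ℝ) + 1) * ∫ u in (0 : ℝ)..1, u ^ r * (1 - u) ^ (s + 1)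
      = ((s : ℝ) + 1) * ∫ u in (0 : ℝ)..1, u ^ (r + 1) * (1 - u) ^ s := by
  have hderiv : ∀ u : ℝ, HasDerivAt (fun u : ℝ => u ^ (r + 1) * (1 - u) ^ (s + 1))
      (((r : ℝ) + 1) * (u ^ r * (1 - u) ^ (s + 1)) - ((s : ℝ) + 1) * (u ^ (r + 1) * (1 - u) ^ s))
      u := fun u =>
    ((hasDerivAt_pow (r + 1) u).fun_mul
      (((hasDerivAt_id' u).const_sub 1).fun_pow (s + 1))).congr_deriv (by push_cast; ring)
  have hint := intervalIntegral.integral_eq_sub_of_hasDerivAt (fun u _ => hderiv u)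
    (Continuous.intervalIntegrable (by fun_prop) 0 1)
  rw [intervalIntegral.integral_sub (Continuous.intervalIntegrable (by fun_prop) _ _)
    (Continuous.intervalIntegrable (by fun_prop) _ _), intervalIntegral.integral_const_mul,
    intervalIntegral.integral_const_mul] at hint
  simpa [sub_eq_zero] using hint

theorem integral_pow_mul_one_sub_pow (r s : ℕ) :
    ∫ u in (0 : ℝ)..1, u ^ r * (1 - u) ^ s = (((r + s + 1) * (r + s).choose r : ℕ) : ℝ)⁻¹ := by
  induction s generalizing r with
  | zero => simp
  | succ s ih =>
    have hr : (r : ℝ) + 1 ≠ 0 := by positivity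
    rw [← mul_right_inj' hr, integral_pow_mul_one_sub_pow_succ, ih,
      show r + 1 + s + 1 = r + (s + 1) + 1 by ring, show r + 1 + s = r + (s + 1) by ring]
    have hchoose : ((r + (s + 1)).choose (r + 1) : ℝ) * (r + 1)
        = (r + (s + 1)).choose r * (s + 1) := by
      have := Nat.choose_succ_right_eq (r + (s + 1)) r
      rw [Nat.add_sub_cancel_left] at this
      exact_mod_cast this
    have h1 : ((r + (s + 1)).choose (r + 1) : ℝ) ≠ 0 := by
      exact_mod_cast (Nat.choose_pos (by omega)).ne'
    have h2 : ((r + (s + 1)).choose r : ℝ) ≠ 0 := by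
      exact_mod_cast (Nat.choose_pos (by omega)).ne'
    push_cast
    field_simp
    linear_combination -hchoose

theorem IB_natCast_add_one (r s : ℕ) (t : ℝ) :
    IB ((r : ℝ) + 1) ((s : ℝ) + 1) t
      = ((r + s + 1) * (r + s).choose r : ℕ) * ∫ u in (0 : ℝ)..t, u ^ r * (1 - u) ^ s := by
  have hpow : ∀ (u : ℝ) (n : ℕ), u ^ ((n : ℝ) + 1 - 1) = u ^ n := fun u n => by
    rw [add_sub_cancel_right, Real.rpow_natCast]
  simp only [IB, betaFun, hpow, integral_pow_mul_one_sub_pow, div_inv_eq_mul, mul_comm]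

theorem sum_binomial_pow_mul_one_sub_pow (n : ℕ) (u : ℝ) :
    ∑ r : Fin (n + 1), (n.choose r : ℝ) * (u ^ (r : ℕ) * (1 - u) ^ (n - r)) = 1 := by
  have hbinom := (add_pow u (1 - u) n).symm
  rw [add_sub_cancel, one_pow] at hbinom
  rw [Fin.sum_univ_eq_sum_range (fun r => (n.choose r : ℝ) * (u ^ r * (1 - u) ^ (n - r)))]
  exact (Finset.sum_congr rfl fun r _ => by ring).trans hbinom

theorem sum_IB (k : ℕ) (t : ℝ) : ∑ r : Fin k, IB ((r : ℝ) + 1) ((k : ℝ) - r) t = k * t := by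
  cases k with
  | zero => simp
  | succ n =>
    have hIB : ∀ r : Fin (n + 1), IB ((r : ℝ) + 1) (((n + 1 : ℕ) : ℝ) - r) t
        = ∫ u in (0 : ℝ)..t,
            (n + 1 : ℝ) * ((n.choose r : ℝ) * (u ^ (r : ℕ) * (1 - u) ^ (n - r))) := by
      intro r
      have hr : (r : ℕ) ≤ n := Nat.lt_succ_iff.mp r.2
      rw [show ((n + 1 : ℕ) : ℝ) - r = ((n - r : ℕ) : ℝ) + 1 by push_cast [hr]; ring,
        IB_natCast_add_one, Nat.add_sub_cancel' hr, intervalIntegral.integral_const_mul,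
        intervalIntegral.integral_const_mul]
      push_cast
      ring
    simp_rw [hIB]
    rw [← intervalIntegral.integral_finsetSum fun r _ =>
      Continuous.intervalIntegrable (by fun_prop) _ _]
    simp_rw [← Finset.mul_sum, sum_binomial_pow_mul_one_sub_pow]
    simp only [mul_one, intervalIntegral.integral_const, sub_zero, smul_eq_mul]
    push_cast
    ring

theorem sum_measureReal_le_eq_of_cdf_eq_IB {Ω : Type*} [MeasurableSpace Ω] {P : Measure Ω}
    {k m : ℕ} {Y : Fin k × Fin m → Ω → ℝ} {F : ℝ → ℝ}
    (hcdf : ∀ i y, (P {ω | Y i ω ≤ y}).toReal = IB ((i.1 : ℝ) + 1) ((k : ℝ) - (i.1 : ℝ)) (F y))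
    (y : ℝ) : ∑ i, P.real {ω | Y i ω ≤ y} = (m * k : ℕ) * F y := by
  simp_rw [measureReal_def, hcdf, Fintype.sum_prod_type, Finset.sum_const, Finset.card_univ,
    Fintype.card_fin, nsmul_eq_mul, ← Finset.mul_sum, sum_IB]
  push_cast
  ring

theorem List.Pairwise.getElem_le_iff_lt_countP {α : Type*} [LinearOrder α] {l : List α}
    (hl : l.Pairwise (· ≤ ·)) {i : ℕ} (hi : i < l.length) (x : α) :
    l[i] ≤ x ↔ i < l.countP (· ≤ x) := by
  induction l generalizing i with
  | nil => simp at hi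
  | cons a l ih =>
    obtain ⟨ha_le, hl⟩ := List.pairwise_cons.mp hl
    by_cases hax : a ≤ x
    · rw [List.countP_cons_of_pos (by simpa using hax)]
      cases i with
      | zero => simpa using hax
      | succ j => simpa using ih hl (by simpa using hi)
    · have hhead : ∀ b ∈ a :: l, a ≤ b := by simpa using ha_le
      have hcount : (a :: l).countP (· ≤ x) = 0 :=
        List.countP_eq_zero.mpr fun b hb => by
          simpa using (lt_of_not_ge hax).trans_le (hhead b hb)
      rw [hcount]
      simpa using (lt_of_not_ge hax).trans_le (hhead _ (List.getElem_mem hi))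

theorem countP_sort_map_univ_eq_card_filter {Ω ι : Type*} [Fintype ι] (Z : ι → Ω → ℝ) (ω : Ω)
    (x : ℝ) :
    ((Finset.univ.val.map fun i => Z i ω).sort (· ≤ ·)).countP (· ≤ x)
      = (Finset.univ.filter fun i => Z i ω ≤ x).card := by
  rw [← Multiset.coe_countP, Multiset.sort_eq, Multiset.countP_map]
  rfl

section OrderStat

variable {Ω ι : Type*} [Fintype ι] (Z : ι → Ω → ℝ) (ω : Ω) {r : ℕ} {x : ℝ}

theorem orderStat_le_of_le_card_filter (hr : 0 < r)
    (h : r ≤ (Finset.univ.filter fun i => Z i ω ≤ x).card) : orderStat Z r ω ≤ x := by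
  rw [← countP_sort_map_univ_eq_card_filter] at h
  have hi := (Nat.sub_lt hr one_pos).trans_le (h.trans List.countP_le_length)
  rw [orderStat, List.getD_eq_getElem _ _ hi,
    (Multiset.pairwise_sort _ _).getElem_le_iff_lt_countP hi]
  omega

theorem le_card_filter_of_orderStat_le (hr : r ≤ Fintype.card ι) (h : orderStat Z r ω ≤ x) :
    r ≤ (Finset.univ.filter fun i => Z i ω ≤ x).card := by
  rcases Nat.eq_zero_or_pos r with rfl | hr0
  · exact Nat.zero_le _
  have hi : r - 1 < ((Finset.univ.val.map fun i => Z i ω).sort (· ≤ ·)).length := by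
    simp only [Multiset.length_sort, Multiset.card_map, Finset.card_val, Finset.card_univ]
    omega
  rw [orderStat, List.getD_eq_getElem _ _ hi,
    (Multiset.pairwise_sort _ _).getElem_le_iff_lt_countP hi,
    countP_sort_map_univ_eq_card_filter] at h
  omega

end OrderStat

section Chebyshev

variable {Ω ι : Type*} [MeasurableSpace Ω] {P : Measure Ω} [IsProbabilityMeasure P] [Fintype ι]
  {Z : ι → Ω → ℝ}

theorem measure_le_abs_card_filter_sub_le (hZ : ∀ i, Measurable (Z i)) (hindep : iIndepFun Z P)
    (x : ℝ) {c : ℝ} (hc : 0 < c) :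
    P {ω | c ≤ |((Finset.univ.filter fun i => Z i ω ≤ x).card : ℝ)
        - ∑ i, P.real {ω | Z i ω ≤ x}|}
      ≤ ENNReal.ofReal (Fintype.card ι / (4 * c ^ 2)) := by
  set g : ℝ → ℝ := (Set.Iic x).indicator 1
  have hg : Measurable g := measurable_const.indicator measurableSet_Iic
  have hg01 : ∀ y, g y ∈ Set.Icc (0 : ℝ) 1 := fun y => by
    by_cases hy : y ≤ x <;> simp [g, hy]
  have hmemLp : ∀ i, MemLp (g ∘ Z i) 2 P := fun i =>
    (memLp_top_of_bound (hg.comp (hZ i)).aestronglyMeasurable 1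
      (ae_of_all _ fun ω =>
        (Real.norm_of_nonneg (hg01 (Z i ω)).1).trans_le (hg01 (Z i ω)).2)).mono_exponent le_top
  have hcount : ∀ ω, ((Finset.univ.filter fun i => Z i ω ≤ x).card : ℝ) = (∑ i, g ∘ Z i) ω := by
    intro ω
    rw [Finset.natCast_card_filter, Finset.sum_apply]
    simp [g, Set.indicator_apply]
  have hmean : P[∑ i, g ∘ Z i] = ∑ i, P.real {ω | Z i ω ≤ x} := by
    simp_rw [Finset.sum_apply]
    rw [integral_finsetSum _ fun i _ => (hmemLp i).integrable one_le_two]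
    refine Finset.sum_congr rfl fun i _ => ?_
    exact integral_indicator_one ((hZ i) measurableSet_Iic)
  have hvar : variance (∑ i, g ∘ Z i) P ≤ Fintype.card ι / 4 := by
    rw [IndepFun.variance_sum (fun i _ => hmemLp i)
      fun i _ j _ hij => (hindep.comp (fun _ => g) fun _ => hg).indepFun hij]
    calc ∑ i, variance (g ∘ Z i) P ≤ ∑ _i : ι, ((1 - 0) / 2 : ℝ) ^ 2 :=
          Finset.sum_le_sum fun i _ => variance_le_sq_of_bounded
            (ae_of_all _ fun ω => hg01 (Z i ω)) (hg.comp (hZ i)).aemeasurable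
      _ = Fintype.card ι / 4 := by
        rw [Finset.sum_const, Finset.card_univ, nsmul_eq_mul]
        norm_num [div_eq_mul_inv]
  simp_rw [hcount, ← hmean]
  refine (meas_ge_le_variance_div_sq (memLp_finsetSum' _ fun i _ => hmemLp i) hc).trans
    (ENNReal.ofReal_le_ofReal ?_)
  rw [← div_div]
  gcongr

theorem measure_lt_orderStat_le (hZ : ∀ i, Measurable (Z i)) (hindep : iIndepFun Z P)
    {r : ℕ} (hr : 0 < r) {x c : ℝ} (hc : 0 < c)
    (hmean : (r : ℝ) - 1 + c ≤ ∑ i, P.real {ω | Z i ω ≤ x}) :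
    P {ω | x < orderStat Z r ω} ≤ ENNReal.ofReal (Fintype.card ι / (4 * c ^ 2)) := by
  refine (measure_mono fun ω (hω : x < orderStat Z r ω) => ?_).trans
    (measure_le_abs_card_filter_sub_le hZ hindep x hc)
  have hcount : ((Finset.univ.filter fun i => Z i ω ≤ x).card : ℝ) + 1 ≤ r := by
    exact_mod_cast not_le.mp fun h => hω.not_ge (orderStat_le_of_le_card_filter Z ω hr h)
  rw [Set.mem_ofPred_eq, le_abs]
  right; linarith

theorem measure_orderStat_le_le (hZ : ∀ i, Measurable (Z i)) (hindep : iIndepFun Z P)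
    {r : ℕ} (hr : r ≤ Fintype.card ι) {x c : ℝ} (hc : 0 < c)
    (hmean : ∑ i, P.real {ω | Z i ω ≤ x} + c ≤ r) :
    P {ω | orderStat Z r ω ≤ x} ≤ ENNReal.ofReal (Fintype.card ι / (4 * c ^ 2)) := by
  refine (measure_mono fun ω (hω : orderStat Z r ω ≤ x) => ?_).trans
    (measure_le_abs_card_filter_sub_le hZ hindep x hc)
  have hcount : (r : ℝ) ≤ (Finset.univ.filter fun i => Z i ω ≤ x).card := by
    exact_mod_cast le_card_filter_of_orderStat_le Z ω hr hω
  rw [Set.mem_ofPred_eq, le_abs]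
  left; linarith

theorem measure_abs_orderStat_sub_gt_le (hZ : ∀ i, Measurable (Z i)) (hindep : iIndepFun Z P)
    {r : ℕ} (hr₀ : 0 < r) (hr : r ≤ Fintype.card ι) {x ε c₁ c₂ : ℝ} (hc₁ : 0 < c₁) (hc₂ : 0 < c₂)
    (hupper : (r : ℝ) - 1 + c₁ ≤ ∑ i, P.real {ω | Z i ω ≤ x + ε})
    (hlower : ∑ i, P.real {ω | Z i ω ≤ x - ε} + c₂ ≤ r) :
    P {ω | |orderStat Z r ω - x| > ε}
      ≤ ENNReal.ofReal (Fintype.card ι / (4 * c₁ ^ 2))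
        + ENNReal.ofReal (Fintype.card ι / (4 * c₂ ^ 2)) := by
  have hsplit : {ω | |orderStat Z r ω - x| > ε}
      ⊆ {ω | x + ε < orderStat Z r ω} ∪ {ω | orderStat Z r ω ≤ x - ε} :=
    fun ω (hω : |orderStat Z r ω - x| > ε) => by
      rcases lt_abs.mp hω with h | h
      · exact Or.inl (show x + ε < orderStat Z r ω by linarith)
      · exact Or.inr (show orderStat Z r ω ≤ x - ε by linarith)
  exact (measure_mono hsplit).trans <| (measure_union_le _ _).trans <|
    add_le_add (measure_lt_orderStat_le hZ hindep hr₀ hc₁ hupper)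
      (measure_orderStat_le_le hZ hindep hr hc₂ hlower)

end Chebyshev

theorem tendsto_ofReal_div_four_mul_sq {u : ℕ → ℝ} (hu : Tendsto u atTop atTop) (δ : ℝ) :
    Tendsto (fun m => ENNReal.ofReal (u m / (4 * (u m * δ) ^ 2))) atTop (nhds 0) := by
  have hlim : Tendsto (fun m => (4 * δ ^ 2)⁻¹ * (u m)⁻¹) atTop (nhds 0) := by
    simpa only [mul_zero, Pi.inv_apply] using hu.inv_tendsto_atTop.const_mul (4 * δ ^ 2)⁻¹
  have heq : (fun m => (4 * δ ^ 2)⁻¹ * (u m)⁻¹) =ᶠ[atTop] fun m => u m / (4 * (u m * δ) ^ 2) := by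
    filter_upwards [hu.eventually_ne_atTop 0] with m hm
    field_simp
  rw [← ENNReal.ofReal_zero]
  exact (ENNReal.continuous_ofReal.tendsto 0).comp (hlim.congr' heq)

theorem orderStat_tendsto_quantile_general
    {Ω : Type*} [MeasurableSpace Ω] (P : Measure Ω) [IsProbabilityMeasure P]
    (F : ℝ → ℝ)
    (k : ℕ) (hk : 1 ≤ k)
    (Y : (m : ℕ) → Fin k × Fin m → Ω → ℝ)
    (hmeas : ∀ m i, Measurable (Y m i))
    (hindep : ∀ m, iIndepFun (Y m) P)
    (hcdf : ∀ (m : ℕ) (i : Fin k × Fin m) (y : ℝ),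
      (P {ω | Y m i ω ≤ y}).toReal = IB ((i.1 : ℝ) + 1) ((k : ℝ) - (i.1 : ℝ)) (F y))
    (p : ℝ) (hp : p ∈ Set.Ioo (0:ℝ) 1)
    (ζ : ℝ)
    (hFζ : ∀ ε > (0:ℝ), F (ζ - ε) < p ∧ p < F (ζ + ε)) :
    ∀ ε > (0:ℝ),
      Tendsto (fun m : ℕ =>
          P {ω | |orderStat (Y m) (Int.toNat ⌈((m * k : ℕ) : ℝ) * p⌉) ω - ζ| > ε})
        atTop (nhds 0) := by
  intro ε hε
  obtain ⟨hlo, hhi⟩ := hFζ ε hε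
  set n : ℕ → ℝ := fun m => ((m * k : ℕ) : ℝ)
  have hn : Tendsto n atTop atTop := tendsto_natCast_atTop_atTop.comp
    (tendsto_atTop_mono (fun m => Nat.le_mul_of_pos_right m hk) tendsto_id)
  have hbound := (tendsto_ofReal_div_four_mul_sq hn (F (ζ + ε) - p)).add
      (tendsto_ofReal_div_four_mul_sq hn (p - F (ζ - ε)))
  rw [add_zero] at hbound
  refine tendsto_of_tendsto_of_tendsto_of_le_of_le' tendsto_const_nhds hbound
    (.of_forall fun _ => zero_le) ?_
  filter_upwards [eventually_ge_atTop 1] with m hm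
  have hnpos : 0 < n m := by positivity
  have hcard : (Fintype.card (Fin k × Fin m) : ℝ) = n m := by simp [n, mul_comm]
  have hmean := sum_measureReal_le_eq_of_cdf_eq_IB (hcdf m)
  have hnp : 0 < n m * p := mul_pos hnpos hp.1
  have hceil_lt := Nat.ceil_lt_add_one hnp.le
  have hceil_le : ⌈n m * p⌉₊ ≤ Fintype.card (Fin k × Fin m) := by
    rw [Nat.ceil_le, hcard]
    nlinarith [hp.2]
  rw [Int.ceil_toNat]
  refine (measure_abs_orderStat_sub_gt_le (hmeas m) (hindep m) (Nat.ceil_pos.mpr hnp) hceil_le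
    (mul_pos hnpos (sub_pos.mpr hhi)) (mul_pos hnpos (sub_pos.mpr hlo)) ?_ ?_).trans_eq
    (by rw [hcard])
  · rw [hmean]; linarith
  · rw [hmean]; linarith [Nat.le_ceil (n m * p)]

/-- Under perfect ranking with fixed set size `k` and `m → ∞` (so `n = m k → ∞`), fix
`p ∈ (0,1)` and set `r_p = ⌈n p⌉` (which equals `n p` if `n p` is an integer and
`⌊n p⌋ + 1` otherwise).  If `F` is continuous and strictly increasing at `ζ_p`, in the
sense that `F (ζ_p - ε) < p < F (ζ_p + ε)` for every `ε > 0`, then the `r_p`-th order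
statistic of the pooled ranked set sample converges in probability to `ζ_p`. -/
theorem orderStat_tendsto_quantile
    {Ω : Type*} [MeasurableSpace Ω] (P : Measure Ω) [IsProbabilityMeasure P]
    (μ : Measure ℝ) [IsProbabilityMeasure μ] (F : ℝ → ℝ)
    (hF : ∀ y, F y = (μ (Set.Iic y)).toReal)
    (k : ℕ) (hk : 1 ≤ k)
    (Y : (m : ℕ) → Fin k × Fin m → Ω → ℝ)
    (hmeas : ∀ m i, Measurable (Y m i))
    (hindep : ∀ m, iIndepFun (Y m) P)
    (hcdf : ∀ (m : ℕ) (i : Fin k × Fin m) (y : ℝ),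
      (P {ω | Y m i ω ≤ y}).toReal = IB ((i.1 : ℝ) + 1) ((k : ℝ) - (i.1 : ℝ)) (F y))
    (p : ℝ) (hp : p ∈ Set.Ioo (0:ℝ) 1)
    (ζ : ℝ) (hζ : ζ = sInf {y : ℝ | F y ≥ p})
    (hFζ : ∀ ε > (0:ℝ), F (ζ - ε) < p ∧ p < F (ζ + ε)) :
    ∀ ε > (0:ℝ),
      Tendsto (fun m : ℕ =>
          P {ω | |orderStat (Y m) (Int.toNat ⌈((m * k : ℕ) : ℝ) * p⌉) ω - ζ| > ε})
        atTop (nhds 0) :=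
  orderStat_tendsto_quantile_general P F k hk Y hmeas hindep hcdf p hp ζ hFζ
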